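/- Let γ ≥ 0 and let L(n) : B^γ → X (n ≥ 0) be bounded linear operators. Then the following are equivalent: (i) the homogeneous system x(n+1) = L(n)x_n is uniformly stable in X with respect to B^γ; (ii) it is uniformly stable in B^γ; (iii) the first order system y(n+1) = D(n)y(n) in the Banach space B^γ is uniformly stable. -/
import Mathlib


open scoped ENNReal
open MeasureTheory

namespace BP

variable {X : Type*} [NormedAddCommGroup X] [NormedSpace ℝ X] [CompleteSpace X]

/-- Weighted coordinate size: index `k : ℕ` represents the coordinate `−k ≤ 0`,
so the weight `e^{γ m}` becomes `e^{−γ k}`. -/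
noncomputable def wnorm (γ : ℝ) (φ : ℕ → X) (k : ℕ) : ℝ := ‖φ k‖ * Real.exp (-(γ * k))

/-- Membership in the phase space `B^γ`. -/
def MemB (γ : ℝ) (φ : ℕ → X) : Prop := BddAbove (Set.range (wnorm γ φ))

/-- The `B^γ` norm `|φ|_{B^γ} = sup_{m ≤ 0} ‖φ(m)‖ e^{γ m}`. -/
noncomputable def Bnorm (γ : ℝ) (φ : ℕ → X) : ℝ := ⨆ k, wnorm γ φ k

/-- The history `x_n` of `x : ℤ → X` at time `n` : coordinate `−k` is `x (n − k)`. -/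
def hist (x : ℤ → X) (n : ℤ) : ℕ → X := fun k => x (n - k)

/-- `x = x(·, τ, φ; f)` is the solution of `x(n+1) = L(n) x_n + f(n)` (`n ≥ τ`), `x_τ = φ`. -/
def IsSolution (L : ℕ → ((ℕ → X) →ₗ[ℝ] X)) (f : ℕ → X) (τ : ℕ) (φ : ℕ → X)
    (x : ℤ → X) : Prop :=
  (∀ k : ℕ, x ((τ : ℤ) - k) = φ k) ∧
  (∀ n : ℕ, τ ≤ n → x ((n : ℤ) + 1) = L n (hist x (n : ℤ)) + f n)

/-- Restriction of `x : ℤ → X` to `ℤ≥0`. -/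
def restrict (x : ℤ → X) : ℕ → X := fun n => x (n : ℤ)

/-- The `ℓ^p(ℤ≥0, X)` norm (valued in `ℝ≥0∞`). -/
noncomputable def lpNorm (p : ℝ≥0∞) {E : Type*} [NormedAddCommGroup E] (f : ℕ → E) : ℝ≥0∞ :=
  eLpNorm f p Measure.count

/-- `L(n)` is a bounded operator from `B^γ` to `X`. -/
def OpBounded (γ : ℝ) (T : (ℕ → X) →ₗ[ℝ] X) : Prop :=
  ∃ C : ℝ, ∀ φ : ℕ → X, MemB γ φ → ‖T φ‖ ≤ C * Bnorm γ φ

/-- The projection `P_{[−∞,−j]}` : keeps coordinates `−k` with `k ≥ j`. -/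
def Ptail (j : ℕ) : (ℕ → X) →ₗ[ℝ] (ℕ → X) where
  toFun φ := fun k => if j ≤ k then φ k else 0
  map_add' φ ψ := by funext k; by_cases h : j ≤ k <;> simp [h]
  map_smul' c φ := by funext k; by_cases h : j ≤ k <;> simp [h]

/-- The projection `P_{[−j,0]}` : keeps coordinates `−k` with `k ≤ j`. -/
def Phead (j : ℕ) : (ℕ → X) →ₗ[ℝ] (ℕ → X) where
  toFun φ := fun k => if k ≤ j then φ k else 0
  map_add' φ ψ := by funext k; by_cases h : k ≤ j <;> simp [h]
  map_smul' c φ := by funext k; by_cases h : k ≤ j <;> simp [h]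

/-- `E_{−j} : X → B^γ`, placing `ψ` at coordinate `−j`. -/
def Ecoord (j : ℕ) : X →ₗ[ℝ] (ℕ → X) where
  toFun ψ := fun k => if k = j then ψ else 0
  map_add' ψ χ := by funext k; by_cases h : k = j <;> simp [h]
  map_smul' c ψ := by funext k; by_cases h : k = j <;> simp [h]

/-- The backward shift `S`. -/
def shiftS : (ℕ → X) →ₗ[ℝ] (ℕ → X) where
  toFun φ := fun k => if k = 0 then 0 else φ (k - 1)
  map_add' φ ψ := by funext k; by_cases h : k = 0 <;> simp [h]
  map_smul' c φ := by funext k; by_cases h : k = 0 <;> simp [h]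

/-- `D(n) = E₀ ∘ L(n) + S`. -/
def Dop (L : ℕ → ((ℕ → X) →ₗ[ℝ] X)) (n : ℕ) : (ℕ → X) →ₗ[ℝ] (ℕ → X) :=
  (Ecoord 0).comp (L n) + shiftS

/-- `h = H g`, `h(n) = Σ_{k=0}^{n−1} S^{n−k−1} (I − P₀) g(k)`. -/
noncomputable def Hop (g : ℕ → (ℕ → X)) : ℕ → (ℕ → X) :=
  fun n => ∑ k ∈ Finset.range n,
    ((shiftS ^ (n - k - 1) : (ℕ → X) →ₗ[ℝ] (ℕ → X))
      ((LinearMap.id - Phead 0 : (ℕ → X) →ₗ[ℝ] (ℕ → X)) (g k)))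

/-- `(ℓ^p, ℓ^q)`-stability of the nonhomogeneous system. -/
def lplqStable (L : ℕ → ((ℕ → X) →ₗ[ℝ] X)) (p q : ℝ≥0∞) : Prop :=
  ∀ f : ℕ → X, lpNorm p f < ∞ → ∀ x : ℤ → X, IsSolution L f 0 0 x →
    lpNorm q (restrict x) < ∞

/-- Uniform exponential stability in `X` w.r.t. `B^γ`. -/
def UESinX (γ : ℝ) (L : ℕ → ((ℕ → X) →ₗ[ℝ] X)) : Prop :=
  ∃ K : ℝ, 1 ≤ K ∧ ∃ ν : ℝ, 0 < ν ∧
    ∀ (τ : ℕ) (φ : ℕ → X), MemB γ φ → ∀ x : ℤ → X, IsSolution L 0 τ φ x →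
      ∀ n : ℕ, τ ≤ n → ‖x (n : ℤ)‖ ≤ K * Real.exp (-(ν * ((n : ℝ) - (τ : ℝ)))) * Bnorm γ φ

/-- Uniform exponential stability in `B^γ`. -/
def UESinB (γ : ℝ) (L : ℕ → ((ℕ → X) →ₗ[ℝ] X)) : Prop :=
  ∃ K : ℝ, 1 ≤ K ∧ ∃ ν : ℝ, 0 < ν ∧
    ∀ (τ : ℕ) (φ : ℕ → X), MemB γ φ → ∀ x : ℤ → X, IsSolution L 0 τ φ x →
      ∀ n : ℕ, τ ≤ n →
        Bnorm γ (hist x (n : ℤ)) ≤ K * Real.exp (-(ν * ((n : ℝ) - (τ : ℝ)))) * Bnorm γ φ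

/-- Uniform stability in `X` w.r.t. `B^γ`. -/
def USinX (γ : ℝ) (L : ℕ → ((ℕ → X) →ₗ[ℝ] X)) : Prop :=
  ∃ K : ℝ, 1 ≤ K ∧
    ∀ (τ : ℕ) (φ : ℕ → X), MemB γ φ → ∀ x : ℤ → X, IsSolution L 0 τ φ x →
      ∀ n : ℕ, τ ≤ n → ‖x (n : ℤ)‖ ≤ K * Bnorm γ φ

/-- Uniform stability in `B^γ`. -/
def USinB (γ : ℝ) (L : ℕ → ((ℕ → X) →ₗ[ℝ] X)) : Prop :=
  ∃ K : ℝ, 1 ≤ K ∧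
    ∀ (τ : ℕ) (φ : ℕ → X), MemB γ φ → ∀ x : ℤ → X, IsSolution L 0 τ φ x →
      ∀ n : ℕ, τ ≤ n → Bnorm γ (hist x (n : ℤ)) ≤ K * Bnorm γ φ

/-- Condition (★): there exists `m ≤ 0` (here `m = −j`, `j : ℕ`) such that
`sup_{n ≥ 0} ‖L(n) P_{[−∞,m]}‖_{B^γ→X} < ∞`. -/
def StarCond (γ : ℝ) (L : ℕ → ((ℕ → X) →ₗ[ℝ] X)) : Prop :=
  ∃ (j : ℕ) (C : ℝ), ∀ (n : ℕ) (φ : ℕ → X), MemB γ φ → ‖L n (Ptail j φ)‖ ≤ C * Bnorm γ φ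

/-- `z` solves the first order system `z(n+1) = A(n) z(n)` (`n ≥ τ`), `z(τ) = ψ`. -/
def IsFOSol (A : ℕ → ((ℕ → X) →ₗ[ℝ] (ℕ → X))) (τ : ℕ) (ψ : ℕ → X)
    (z : ℕ → (ℕ → X)) : Prop :=
  z τ = ψ ∧ ∀ n : ℕ, τ ≤ n → z (n + 1) = A n (z n)

/-- Uniform exponential stability of the first order system in `B^γ`. -/
def FOUES (γ : ℝ) (A : ℕ → ((ℕ → X) →ₗ[ℝ] (ℕ → X))) : Prop :=
  ∃ K : ℝ, 1 ≤ K ∧ ∃ ν : ℝ, 0 < ν ∧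
    ∀ (τ : ℕ) (ψ : ℕ → X), MemB γ ψ → ∀ z : ℕ → (ℕ → X), IsFOSol A τ ψ z →
      ∀ n : ℕ, τ ≤ n →
        Bnorm γ (z n) ≤ K * Real.exp (-(ν * ((n : ℝ) - (τ : ℝ)))) * Bnorm γ ψ

/-- Uniform stability of the first order system in `B^γ`. -/
def FOUS (γ : ℝ) (A : ℕ → ((ℕ → X) →ₗ[ℝ] (ℕ → X))) : Prop :=
  ∃ K : ℝ, 1 ≤ K ∧
    ∀ (τ : ℕ) (ψ : ℕ → X), MemB γ ψ → ∀ z : ℕ → (ℕ → X), IsFOSol A τ ψ z →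
      ∀ n : ℕ, τ ≤ n → Bnorm γ (z n) ≤ K * Bnorm γ ψ

/-- The associated subdiagonal system: `L_sub(0) = 0`, `L_sub(n) = L(n) P_{[−n+1,0]}`. -/
def Lsub (L : ℕ → ((ℕ → X) →ₗ[ℝ] X)) : ℕ → ((ℕ → X) →ₗ[ℝ] X) :=
  fun n => if n = 0 then 0 else (L n).comp (Phead (n - 1))

/-- The system has bounded delay of order `d`. -/
def BoundedDelay (L : ℕ → ((ℕ → X) →ₗ[ℝ] X)) (d : ℕ) : Prop :=
  ∀ n : ℕ, ∃ A : Fin d → (X →L[ℝ] X), ∀ φ : ℕ → X, L n φ = ∑ k : Fin d, A k (φ k)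

lemma wnorm_nonneg (γ : ℝ) (φ : ℕ → X) (k : ℕ) : 0 ≤ wnorm γ φ k :=
  mul_nonneg (norm_nonneg _) (Real.exp_pos _).le

lemma bnorm_nonneg (γ : ℝ) (φ : ℕ → X) : 0 ≤ Bnorm γ φ :=
  Real.iSup_nonneg (wnorm_nonneg γ φ)

lemma wnorm_le_bnorm {γ : ℝ} {φ : ℕ → X} (h : MemB γ φ) (k : ℕ) :
    wnorm γ φ k ≤ Bnorm γ φ := le_ciSup h k

lemma bnorm_le {γ : ℝ} {φ : ℕ → X} {a : ℝ} (ha : 0 ≤ a)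
    (h : ∀ k, wnorm γ φ k ≤ a) : Bnorm γ φ ≤ a := Real.iSup_le h ha

/-- Bound on all weighted coordinates of the history of a solution. -/
lemma coord_bound {γ : ℝ} (hγ : 0 ≤ γ) {L : ℕ → ((ℕ → X) →ₗ[ℝ] X)} {τ n : ℕ}
    {φ : ℕ → X} {x : ℤ → X}
    (hφ : MemB γ φ) (hx : IsSolution L 0 τ φ x) (hn : τ ≤ n)
    {C : ℝ} (hC : Bnorm γ φ ≤ C)
    (hbd : ∀ m : ℕ, τ ≤ m → m ≤ n → ‖x (m : ℤ)‖ ≤ C) :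
    ∀ k, wnorm γ (hist x (n : ℤ)) k ≤ C := by
  intro k
  have hC0 : 0 ≤ C := le_trans (bnorm_nonneg γ φ) hC
  have hexp : ∀ j : ℕ, Real.exp (-(γ * j)) ≤ 1 := by
    intro j
    rw [Real.exp_le_one_iff]
    have : 0 ≤ γ * j := mul_nonneg hγ (Nat.cast_nonneg j)
    linarith
  by_cases hk : k ≤ n - τ
  · have hm1 : τ ≤ n - k := by omega
    have hm2 : n - k ≤ n := by omega
    have hmz : ((n - k : ℕ) : ℤ) = (n : ℤ) - k := by omega
    have hxb : ‖x ((n : ℤ) - k)‖ ≤ C := by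
      rw [← hmz]; exact hbd (n - k) hm1 hm2
    calc wnorm γ (hist x (n : ℤ)) k = ‖x ((n : ℤ) - k)‖ * Real.exp (-(γ * k)) := rfl
      _ ≤ C * 1 := mul_le_mul hxb (hexp k) (Real.exp_pos _).le hC0
      _ = C := mul_one C
  · set j := k - (n - τ) with hj
    have hjk : j ≤ k := by omega
    have hz : (τ : ℤ) - j = (n : ℤ) - k := by omega
    have hval : hist x (n : ℤ) k = φ j := by
      show x ((n : ℤ) - k) = φ j
      rw [← hz]; exact hx.1 j
    have hmono : Real.exp (-(γ * k)) ≤ Real.exp (-(γ * j)) := by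
      apply Real.exp_le_exp.mpr
      have : γ * j ≤ γ * k :=
        mul_le_mul_of_nonneg_left (by exact_mod_cast hjk) hγ
      linarith
    calc wnorm γ (hist x (n : ℤ)) k = ‖φ j‖ * Real.exp (-(γ * k)) := by
          rw [wnorm, hval]
      _ ≤ ‖φ j‖ * Real.exp (-(γ * j)) :=
          mul_le_mul_of_nonneg_left hmono (norm_nonneg _)
      _ = wnorm γ φ j := rfl
      _ ≤ Bnorm γ φ := wnorm_le_bnorm hφ j
      _ ≤ C := hC

/-- The history of a solution always lies in `B^γ`. -/
lemma memB_hist {γ : ℝ} (hγ : 0 ≤ γ) {L : ℕ → ((ℕ → X) →ₗ[ℝ] X)} {τ n : ℕ}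
    {φ : ℕ → X} {x : ℤ → X}
    (hφ : MemB γ φ) (hx : IsSolution L 0 τ φ x) (hn : τ ≤ n) :
    MemB γ (hist x (n : ℤ)) := by
  set S : ℝ := ∑ k ∈ Finset.range (n - τ + 1), ‖x ((n : ℤ) - k)‖ with hS
  set C : ℝ := max (Bnorm γ φ) S with hCdef
  have hbd : ∀ m : ℕ, τ ≤ m → m ≤ n → ‖x (m : ℤ)‖ ≤ C := by
    intro m hm1 hm2
    have hmem : n - m ∈ Finset.range (n - τ + 1) := by
      simp only [Finset.mem_range]; omega
    have h1 : ‖x ((n : ℤ) - (n - m : ℕ))‖ ≤ S :=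
      Finset.single_le_sum (f := fun k : ℕ => ‖x ((n : ℤ) - k)‖)
        (fun i _ => norm_nonneg _) hmem
    have h2 : ((n : ℤ) - (n - m : ℕ)) = (m : ℤ) := by omega
    rw [h2] at h1
    exact h1.trans (le_max_right _ _)
  have hall := coord_bound hγ hφ hx hn (le_max_left (Bnorm γ φ) S) hbd
  exact ⟨C, by rintro _ ⟨k, rfl⟩; exact hall k⟩

/-- One step of the first order system reproduces the history dynamics. -/
lemma hist_step {L : ℕ → ((ℕ → X) →ₗ[ℝ] X)} {τ n : ℕ} {φ : ℕ → X} {x : ℤ → X}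
    (hx : IsSolution L 0 τ φ x) (hn : τ ≤ n) :
    Dop L n (hist x (n : ℤ)) = hist x ((n : ℤ) + 1) := by
  have hrec : x ((n : ℤ) + 1) = L n (hist x (n : ℤ)) := by
    have := hx.2 n hn; simpa using this
  funext k
  show (Ecoord 0) (L n (hist x (n : ℤ))) k + shiftS (hist x (n : ℤ)) k
      = x ((n : ℤ) + 1 - k)
  cases k with
  | zero =>
    simp [Ecoord, shiftS, hrec]
  | succ k =>
    have h1 : (Ecoord 0) (L n (hist x (n : ℤ))) (k + 1) = 0 := by
      simp [Ecoord]
    have h2 : shiftS (hist x (n : ℤ)) (k + 1) = x ((n : ℤ) - k) := by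
      simp [shiftS, hist]
    rw [h1, h2, zero_add]
    congr 1
    push_cast
    ring

lemma isFOSol_hist {L : ℕ → ((ℕ → X) →ₗ[ℝ] X)} {τ : ℕ} {φ : ℕ → X} {x : ℤ → X}
    (hx : IsSolution L 0 τ φ x) :
    IsFOSol (fun n => Dop L n) τ φ (fun n => hist x (n : ℤ)) := by
  constructor
  · funext k; exact hx.1 k
  · intro n hn
    have := (hist_step hx hn).symm
    simpa [Nat.cast_add, Nat.cast_one] using this

/-- Forward construction of the solution values. -/
noncomputable def solF (L : ℕ → ((ℕ → X) →ₗ[ℝ] X)) (τ : ℕ) (ψ : ℕ → X) : ℕ → X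
  | 0 => ψ 0
  | (j + 1) => L (τ + j) (fun k => if _ : k ≤ j then solF L τ ψ (j - k) else ψ (k - j))
  decreasing_by omega

/-- The solution of the homogeneous IVP. -/
noncomputable def solX (L : ℕ → ((ℕ → X) →ₗ[ℝ] X)) (τ : ℕ) (ψ : ℕ → X) : ℤ → X :=
  fun m => if (τ : ℤ) ≤ m then solF L τ ψ (m - τ).toNat else ψ (τ - m).toNat

lemma solX_isSolution (L : ℕ → ((ℕ → X) →ₗ[ℝ] X)) (τ : ℕ) (ψ : ℕ → X) :
    IsSolution L 0 τ ψ (solX L τ ψ) := by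
  constructor
  · intro k
    cases k with
    | zero =>
      show solX L τ ψ ((τ : ℤ) - 0) = ψ 0
      rw [solX, if_pos (by omega)]
      have : ((τ : ℤ) - 0 - τ).toNat = 0 := by omega
      rw [this, solF]
    | succ k =>
      show solX L τ ψ ((τ : ℤ) - (k + 1 : ℕ)) = ψ (k + 1)
      rw [solX, if_neg (by push_cast; omega)]
      congr 1
      push_cast
      omega
  · intro n hn
    have hpos : (τ : ℤ) ≤ (n : ℤ) + 1 := by omega
    have htn : ((n : ℤ) + 1 - τ).toNat = (n - τ) + 1 := by omega
    have hτn : τ + (n - τ) = n := by omega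
    have hfun : (fun k => if _ : k ≤ n - τ then solF L τ ψ (n - τ - k) else ψ (k - (n - τ)))
        = hist (solX L τ ψ) (n : ℤ) := by
      funext k
      by_cases hk : k ≤ n - τ
      · rw [dif_pos hk]
        show solF L τ ψ (n - τ - k) = solX L τ ψ ((n : ℤ) - k)
        rw [solX, if_pos (by omega)]
        congr 1
        omega
      · rw [dif_neg hk]
        show ψ (k - (n - τ)) = solX L τ ψ ((n : ℤ) - k)
        rw [solX, if_neg (by omega)]
        congr 1
        omega
    have hlhs : solX L τ ψ ((n : ℤ) + 1) = L n (hist (solX L τ ψ) (n : ℤ)) := by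
      rw [solX]
      simp only [if_pos hpos, htn]
      rw [solF, hfun, hτn]
    rw [hlhs]
    simp

lemma fo_eq_hist {L : ℕ → ((ℕ → X) →ₗ[ℝ] X)} {τ : ℕ} {ψ : ℕ → X} {x : ℤ → X}
    {z : ℕ → (ℕ → X)}
    (hx : IsSolution L 0 τ ψ x) (hz : IsFOSol (fun n => Dop L n) τ ψ z) :
    ∀ n : ℕ, τ ≤ n → z n = hist x (n : ℤ) := by
  intro n hn
  induction n, hn using Nat.le_induction with
  | base =>
    rw [hz.1]; funext k; exact (hx.1 k).symm
  | succ n hn ih =>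
    rw [hz.2 n hn, ih]
    have := hist_step hx hn
    simpa [Nat.cast_add, Nat.cast_one] using this

/-- Proposition 4.3: for `γ ≥ 0`, US in `X` w.r.t. `B^γ` ⟺ US in `B^γ`
⟺ US of the first order system `y(n+1) = D(n)y(n)` in `B^γ`. -/
theorem statement13 (γ : ℝ) (hγ : 0 ≤ γ) (L : ℕ → ((ℕ → X) →ₗ[ℝ] X))
    (hL : ∀ n, OpBounded γ (L n)) :
    (USinX γ L ↔ USinB γ L) ∧
    (USinX γ L ↔ FOUS γ (fun n => Dop L n)) := by
  have hXB : USinX γ L → USinB γ L := by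
    rintro ⟨K, hK, h⟩
    refine ⟨K, hK, fun τ φ hφ x hx n hn => ?_⟩
    have hC : Bnorm γ φ ≤ K * Bnorm γ φ :=
      le_mul_of_one_le_left (bnorm_nonneg γ φ) hK
    refine bnorm_le (mul_nonneg (by linarith) (bnorm_nonneg γ φ))
      (coord_bound hγ hφ hx hn hC ?_)
    intro m hm1 _
    exact h τ φ hφ x hx m hm1
  have hBX : USinB γ L → USinX γ L := by
    rintro ⟨K, hK, h⟩
    refine ⟨K, hK, fun τ φ hφ x hx n hn => ?_⟩
    have hmem : MemB γ (hist x (n : ℤ)) := memB_hist hγ hφ hx hn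
    have h0 : wnorm γ (hist x (n : ℤ)) 0 ≤ Bnorm γ (hist x (n : ℤ)) :=
      wnorm_le_bnorm hmem 0
    have heq : wnorm γ (hist x (n : ℤ)) 0 = ‖x (n : ℤ)‖ := by
      simp [wnorm, hist]
    linarith [h τ φ hφ x hx n hn]
  have hBFO : USinB γ L → FOUS γ (fun n => Dop L n) := by
    rintro ⟨K, hK, h⟩
    refine ⟨K, hK, fun τ ψ hψ z hz n hn => ?_⟩
    have hx := solX_isSolution L τ ψ
    rw [fo_eq_hist hx hz n hn]
    exact h τ ψ hψ _ hx n hn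
  have hFOB : FOUS γ (fun n => Dop L n) → USinB γ L := by
    rintro ⟨K, hK, h⟩
    exact ⟨K, hK, fun τ φ hφ x hx n hn =>
      h τ φ hφ _ (isFOSol_hist hx) n hn⟩
  exact ⟨⟨hXB, hBX⟩, ⟨fun hx => hBFO (hXB hx), fun hf => hBX (hFOB hf)⟩⟩

end BP
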